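/- Let n ≥ 2, let Ω ⊆ ℝⁿ be a bounded open convex set, and let u, v ∈ C²(Ω) ∩ C⁰(Ω̄) be convex functions. If det D²u(x) ≤ det D²v(x) for all x ∈ Ω and u ≥ v on ∂Ω, then u(x) ≥ v(x) for all x ∈ Ω. -/

import Mathlib

open scoped RealInnerProductSpace
noncomputable section

abbrev Euc (n : ℕ) := EuclideanSpace ℝ (Fin n)

/-- Hessian matrix of `u` at `x`. -/
def hessianMatrix {n : ℕ} (u : Euc n → ℝ) (x : Euc n) : Matrix (Fin n) (Fin n) ℝ :=
  Matrix.of fun i j =>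
    iteratedFDeriv ℝ 2 u x ![EuclideanSpace.single i 1, EuclideanSpace.single j 1]

/-- Determinant of the Hessian of `u` at `x`. -/
def hessDet {n : ℕ} (u : Euc n → ℝ) (x : Euc n) : ℝ := (hessianMatrix u x).det

/-!
Suppose `v x₀ > u x₀` somewhere. Perturb to `w = u - v - ε‖y‖²` with `ε` so small that `w` is still
smaller at `x₀` than anywhere on `∂Ω`; then `w` attains an interior minimum `z`, where
`D²u(z) - D²v(z) = D²w(z) + 2ε I` is positive definite. Since `D²v(z)` is positive semidefinite by
convexity, `det (P + Q) ≥ det P + det Q` (for `P ≥ 0`, `Q > 0`) gives `det D²u(z) > det D²v(z)`.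
-/

open Filter Topology Set
open scoped Matrix MatrixOrder
namespace Matrix
variable {n : Type*} [Fintype n] [DecidableEq n]

lemma IsHermitian.det_add_one {M : Matrix n n ℝ} (hM : M.IsHermitian) :
    (M + 1).det = ∏ i, (hM.eigenvalues i + 1) := by
  have : M + 1 = cfc (fun x : ℝ => x + 1) M := by
    rw [cfc_add_const (1 : ℝ) (fun x => x) M, cfc_id' ℝ M, algebraMap_eq_diagonal]
    rfl
  rw [this, hM.cfc_eq]
  simp [IsHermitian.cfc, -Unitary.conjStarAlgAut_apply]

lemma PosSemidef.one_add_det_le_det_add_one [Nonempty n] {M : Matrix n n ℝ} (hM : M.PosSemidef) :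
    1 + M.det ≤ (M + 1).det := by
  rw [hM.isHermitian.det_add_one, hM.isHermitian.det_eq_prod_eigenvalues]
  have heig := hM.eigenvalues_nonneg
  simpa using Finset.prod_add_prod_le (Finset.mem_univ (Classical.arbitrary n))
    (g := 1) (h := hM.isHermitian.eigenvalues) (by simp [add_comm])
    (fun j _ _ => by simpa using heig j) (fun j _ _ => by simp) (fun _ _ => zero_le_one)
    (fun j _ => heig j)

lemma PosSemidef.det_add_det_le_det_add [Nonempty n] {P Q : Matrix n n ℝ} (hP : P.PosSemidef)
    (hQ : Q.PosDef) : P.det + Q.det ≤ (P + Q).det := by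
  set S := CFC.sqrt Q
  have hS : S.PosSemidef := nonneg_iff_posSemidef.mp (CFC.sqrt_nonneg Q)
  have hSS : S * S = Q := CFC.sqrt_mul_sqrt_self Q hQ.posSemidef.nonneg
  have hdetS : S.det * S.det = Q.det := by rw [← det_mul, hSS]
  have hSunit : IsUnit S.det :=
    isUnit_iff_ne_zero.mpr fun h => hQ.det_pos.ne' (by rw [← hdetS, h, zero_mul])
  set M := S⁻¹ * P * S⁻¹
  have hM : M.PosSemidef := by
    have := hP.conjTranspose_mul_mul_same S⁻¹
    rwa [hS.isHermitian.inv.eq] at this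
  have hPS : P = S * M * S := by
    rw [mul_assoc, nonsing_inv_mul_cancel_right _ _ hSunit,
      mul_nonsing_inv_cancel_left _ _ hSunit]
  have hPQ : P + Q = S * (M + 1) * S := by
    rw [mul_add, add_mul, mul_one, hSS, ← hPS]
  calc P.det + Q.det = S.det * S.det * (M.det + 1) := by
        rw [hPS, det_mul, det_mul, ← hdetS]; ring
    _ ≤ S.det * S.det * (M + 1).det := by
        gcongr
        · exact hdetS ▸ hQ.det_pos.le
        · linarith [hM.one_add_det_le_det_add_one]
    _ = (P + Q).det := by rw [hPQ, det_mul, det_mul]; ring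
end Matrix

section SecondDerivativeTests
variable {g g' : ℝ → ℝ} {a c : ℝ}

lemma IsLocalMin.nonneg_of_hasDerivAt2 (hmin : IsLocalMin g a)
    (hg : ∀ᶠ t in 𝓝 a, HasDerivAt g (g' t) t) (hg' : HasDerivAt g' c a) : 0 ≤ c := by
  by_contra! hc
  have hg'a : g' a = 0 := hmin.hasDerivAt_eq_zero hg.self_of_nhds
  have hslope : ∀ᶠ t in 𝓝[>] a, slope g' a t < 0 :=
    (hasDerivAt_iff_tendsto_slope.mp hg').mono_left (nhdsGT_le_nhdsNE a) |>.eventually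
      (eventually_lt_nhds hc)
  obtain ⟨b, hab, hb⟩ := mem_nhdsGT_iff_exists_Ioo_subset.mp
    (hslope.and (nhdsWithin_le_nhds hg))
  have hanti : StrictAntiOn g (Ico a b) := by
    have hderiv : ∀ t ∈ Ico a b, HasDerivAt g (g' t) t := fun t ht =>
      ht.1.eq_or_lt.elim (fun h => h ▸ hg.self_of_nhds) fun h => (hb ⟨h, ht.2⟩).2
    refine strictAntiOn_of_hasDerivWithinAt_neg (f' := g') (convex_Ico a b)
      (fun t ht => (hderiv t ht).continuousAt.continuousWithinAt) (fun t ht => ?_) fun t ht => ?_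
    · rw [interior_Ico] at ht
      exact (hderiv t (Ioo_subset_Ico_self ht)).hasDerivWithinAt
    · rw [interior_Ico] at ht
      have h := (hb ht).1
      rw [slope_def_field, hg'a, sub_zero] at h
      exact neg_of_div_neg_left h (sub_pos.mpr ht.1).le
  obtain ⟨t, ht, hta⟩ := ((hmin.filter_mono nhdsWithin_le_nhds).and
    (Ioo_mem_nhdsGT hab)).exists (f := 𝓝[>] a)
  exact (hanti (left_mem_Ico.mpr hab) (Ioo_subset_Ico_self hta) hta.1).not_ge ht

lemma ConvexOn.nonneg_of_hasDerivAt2 {s : Set ℝ} (hconv : ConvexOn ℝ s g) (hs : s ∈ 𝓝 a)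
    (hg : ∀ᶠ t in 𝓝 a, HasDerivAt g (g' t) t) (hg' : HasDerivAt g' c a) : 0 ≤ c := by
  obtain ⟨ε, hε, hball⟩ := Metric.mem_nhds_iff.mp (inter_mem hs hg)
  have hderiv : ∀ t ∈ Metric.ball a ε, HasDerivAt g (g' t) t := fun t ht => (hball ht).2
  have hmono : MonotoneOn g' (Metric.ball a ε) := by
    have := (hconv.subset (fun t ht => (hball ht).1) (convex_ball a ε)).monotoneOn_deriv
      fun t ht => (hderiv t ht).differentiableAt
    intro x hx y hy hxy
    simpa only [(hderiv x hx).deriv, (hderiv y hy).deriv] using this hx hy hxy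
  have hacc : AccPt a (𝓟 (Metric.ball a ε)) := by
    simpa using (PerfectSpace.univ_preperfect a (mem_univ a)).nhds_inter
      (Metric.ball_mem_nhds a hε)
  exact hg'.hasDerivWithinAt.nonneg_of_monotoneOn hacc hmono
end SecondDerivativeTests

section RestrictionToLines
variable {E : Type*} [NormedAddCommGroup E] [NormedSpace ℝ E] {f : E → ℝ} {x : E}

lemma tendsto_add_smul_nhds_zero (x h : E) :
    Tendsto (fun t : ℝ => x + t • h) (𝓝 0) (𝓝 x) := by
  have : Continuous fun t : ℝ => x + t • h := by fun_prop
  simpa using this.tendsto 0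

lemma ContDiffAt.eventually_hasDerivAt_comp_add_smul (hf : ContDiffAt ℝ 2 f x) (h : E) :
    ∀ᶠ t in 𝓝 (0 : ℝ), HasDerivAt (fun s => f (x + s • h)) (fderiv ℝ f (x + t • h) h) t := by
  filter_upwards [(tendsto_add_smul_nhds_zero x h).eventually (hf.eventually (by simp))]
    with t ht
  have hline : HasDerivAt (fun s : ℝ => x + s • h) h t := by
    simpa using ((hasDerivAt_id t).smul_const h).const_add x
  exact (ht.differentiableAt (by simp)).hasFDerivAt.comp_hasDerivAt t hline

lemma ContDiffAt.hasDerivAt_fderiv_comp_add_smul (hf : ContDiffAt ℝ 2 f x) (h : E) :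
    HasDerivAt (fun t : ℝ => fderiv ℝ f (x + t • h) h) (fderiv ℝ (fderiv ℝ f) x h h) 0 := by
  have hline : HasDerivAt (fun t : ℝ => x + t • h) h 0 := by
    simpa using ((hasDerivAt_id (0 : ℝ)).smul_const h).const_add x
  have hD : HasFDerivAt (fderiv ℝ f) (fderiv ℝ (fderiv ℝ f) x) (x + (0 : ℝ) • h) := by
    simpa using ((hf.fderiv_right (m := 1) (by norm_num)).differentiableAt
      one_ne_zero).hasFDerivAt
  exact (ContinuousLinearMap.apply ℝ ℝ h).hasFDerivAt.comp_hasDerivAt 0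
    (hD.comp_hasDerivAt 0 hline)

lemma IsLocalMin.fderiv_fderiv_apply_self_nonneg (hmin : IsLocalMin f x)
    (hf : ContDiffAt ℝ 2 f x) (h : E) : 0 ≤ fderiv ℝ (fderiv ℝ f) x h h := by
  refine IsLocalMin.nonneg_of_hasDerivAt2 ?_ (hf.eventually_hasDerivAt_comp_add_smul h)
    (hf.hasDerivAt_fderiv_comp_add_smul h)
  simpa [IsLocalMin, IsMinFilter] using (tendsto_add_smul_nhds_zero x h).eventually hmin

lemma ConvexOn.fderiv_fderiv_apply_self_nonneg {s : Set E} (hconv : ConvexOn ℝ s f)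
    (hs : s ∈ 𝓝 x) (hf : ContDiffAt ℝ 2 f x) (h : E) : 0 ≤ fderiv ℝ (fderiv ℝ f) x h h := by
  have hline : ⇑(AffineMap.lineMap x (x + h) : ℝ →ᵃ[ℝ] E) = fun t => x + t • h := by
    ext t
    simp [AffineMap.lineMap_apply, add_comm]
  have hconv' := hconv.comp_affineMap (AffineMap.lineMap x (x + h))
  rw [hline] at hconv'
  exact hconv'.nonneg_of_hasDerivAt2 (tendsto_add_smul_nhds_zero x h hs)
    (hf.eventually_hasDerivAt_comp_add_smul h) (hf.hasDerivAt_fderiv_comp_add_smul h)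
end RestrictionToLines

lemma fderiv_fderiv_norm_sq {F : Type*} [NormedAddCommGroup F] [InnerProductSpace ℝ F] (x : F) :
    fderiv ℝ (fderiv ℝ fun y : F => ‖y‖ ^ 2) x = 2 • innerSL ℝ := by
  rw [fderiv_norm_sq]
  exact (2 • innerSL ℝ : F →L[ℝ] F →L[ℝ] ℝ).fderiv

section Hessian
variable {n : ℕ} {u v : Euc n → ℝ} {x : Euc n}

lemma hessianMatrix_apply (u : Euc n → ℝ) (x : Euc n) (i j : Fin n) :
    hessianMatrix u x i j =
      fderiv ℝ (fderiv ℝ u) x (EuclideanSpace.single i 1) (EuclideanSpace.single j 1) := by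
  simp [hessianMatrix, iteratedFDeriv_two_apply]

lemma hessianMatrix_eq_toMatrix₂ (u : Euc n → ℝ) (x : Euc n) :
    hessianMatrix u x = LinearMap.toMatrix₂ (EuclideanSpace.basisFun (Fin n) ℝ).toBasis
      (EuclideanSpace.basisFun (Fin n) ℝ).toBasis
      (fderiv ℝ (fderiv ℝ u) x).toLinearMap₁₂ := by
  ext i j
  simp [hessianMatrix_apply]

lemma dotProduct_hessianMatrix_mulVec (u : Euc n → ℝ) (x : Euc n) (y : Fin n → ℝ) :
    y ⬝ᵥ hessianMatrix u x *ᵥ y =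
      fderiv ℝ (fderiv ℝ u) x (WithLp.toLp 2 y) (WithLp.toLp 2 y) := by
  have := dotProduct_toMatrix₂_mulVec (EuclideanSpace.basisFun (Fin n) ℝ).toBasis
      (EuclideanSpace.basisFun (Fin n) ℝ).toBasis (fderiv ℝ (fderiv ℝ u) x).toLinearMap₁₂ y y
  rw [hessianMatrix_eq_toMatrix₂]
  exact this

lemma isHermitian_hessianMatrix (hu : ContDiffAt ℝ 2 u x) : (hessianMatrix u x).IsHermitian := by
  ext i j
  simp only [Matrix.conjTranspose_apply, hessianMatrix_apply, star_trivial]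
  exact hu.isSymmSndFDerivAt (by simp) _ _

lemma posSemidef_hessianMatrix (hu : ContDiffAt ℝ 2 u x)
    (h : ∀ y, 0 ≤ fderiv ℝ (fderiv ℝ u) x y y) : (hessianMatrix u x).PosSemidef :=
  .of_dotProduct_mulVec_nonneg (isHermitian_hessianMatrix hu) fun y => by
    simpa [dotProduct_hessianMatrix_mulVec] using h _

lemma hessianMatrix_sub (hu : ContDiffAt ℝ 2 u x) (hv : ContDiffAt ℝ 2 v x) :
    hessianMatrix (u - v) x = hessianMatrix u x - hessianMatrix v x := by
  ext i j
  simp [hessianMatrix, iteratedFDeriv_sub_apply hu hv]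

lemma hessianMatrix_const_smul (c : ℝ) (hu : ContDiffAt ℝ 2 u x) :
    hessianMatrix (c • u) x = c • hessianMatrix u x := by
  ext i j
  simp [hessianMatrix, iteratedFDeriv_const_smul_apply hu]

lemma hessianMatrix_norm_sq (x : Euc n) :
    hessianMatrix (fun y => ‖y‖ ^ 2) x = (2 : ℝ) • 1 := by
  ext i j
  rw [hessianMatrix_apply, fderiv_fderiv_norm_sq, smul_apply, smul_apply, innerSL_apply_apply]
  simp [Matrix.one_apply, EuclideanSpace.inner_single_left]
end Hessian

lemma IsOpen.exists_isLocalMin_of_lt_frontier {X : Type*} [TopologicalSpace X] {Ω : Set X}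
    (hΩ : IsOpen Ω) (hc : IsCompact (closure Ω)) {w : X → ℝ} (hw : ContinuousOn w (closure Ω))
    {x₀ : X} (hx₀ : x₀ ∈ Ω) (hfr : ∀ y ∈ frontier Ω, w x₀ < w y) : ∃ z ∈ Ω, IsLocalMin w z := by
  obtain ⟨z, hz, hmin⟩ := hc.exists_isMinOn ⟨x₀, subset_closure hx₀⟩ hw
  have hzΩ : z ∈ Ω := by
    by_contra hzΩ
    have hzfr : z ∈ frontier Ω := ⟨hz, by rwa [hΩ.interior_eq]⟩
    exact (hfr z hzfr).not_ge (hmin (subset_closure hx₀))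
  exact ⟨z, hzΩ, hmin.isLocalMin (mem_of_superset (hΩ.mem_nhds hzΩ) subset_closure)⟩

lemma hessDet_lt_of_isLocalMin {n : ℕ} [Nonempty (Fin n)] {u v : Euc n → ℝ} {z : Euc n} {ε : ℝ}
    (hε : 0 < ε) (hu : ContDiffAt ℝ 2 u z) (hv : ContDiffAt ℝ 2 v z)
    (hv_psd : (hessianMatrix v z).PosSemidef)
    (hmin : IsLocalMin (u - v - ε • fun y => ‖y‖ ^ 2) z) : hessDet v z < hessDet u z := by
  have huv : ContDiffAt ℝ 2 (u - v) z := hu.sub hv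
  have hq : ContDiffAt ℝ 2 (ε • fun y : Euc n => ‖y‖ ^ 2) z :=
    (contDiff_norm_sq ℝ).contDiffAt.const_smul ε
  have hw : ContDiffAt ℝ 2 (u - v - ε • fun y => ‖y‖ ^ 2) z := huv.sub hq
  have hpd : (hessianMatrix (u - v - ε • fun y => ‖y‖ ^ 2) z + (ε * 2) • 1).PosDef :=
    Matrix.PosDef.posSemidef_add (posSemidef_hessianMatrix hw
      (hmin.fderiv_fderiv_apply_self_nonneg hw)) (Matrix.PosDef.one.smul (by positivity))
  have hsplit : hessianMatrix u z =
      hessianMatrix v z + (hessianMatrix (u - v - ε • fun y => ‖y‖ ^ 2) z + (ε * 2) • 1) := by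
    rw [hessianMatrix_sub huv hq, hessianMatrix_sub hu hv,
      hessianMatrix_const_smul ε (contDiff_norm_sq ℝ).contDiffAt, hessianMatrix_norm_sq, smul_smul]
    abel
  rw [hessDet, hessDet, hsplit]
  linarith [hv_psd.det_add_det_le_det_add hpd, hpd.det_pos]

theorem comparison_principle_general (n : ℕ) (hn : 2 ≤ n)
    (Ω : Set (Euc n)) (hΩopen : IsOpen Ω) (hΩbdd : Bornology.IsBounded Ω)
    (u v : Euc n → ℝ)
    (hu2 : ContDiffOn ℝ 2 u Ω) (huc : ContinuousOn u (closure Ω))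
    (hv2 : ContDiffOn ℝ 2 v Ω) (hvc : ContinuousOn v (closure Ω)) (hvconv : ConvexOn ℝ Ω v)
    (hdet : ∀ x ∈ Ω, hessDet u x ≤ hessDet v x)
    (hbdry : ∀ x ∈ frontier Ω, v x ≤ u x) :
    ∀ x ∈ Ω, v x ≤ u x := by
  have : Nonempty (Fin n) := ⟨⟨0, by omega⟩⟩
  intro x₀ hx₀
  by_contra! hlt
  obtain ⟨R, hR⟩ := hΩbdd.closure.subset_closedBall 0
  have hnorm : ∀ y ∈ closure Ω, ‖y‖ ^ 2 ≤ R ^ 2 := fun y hy =>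
    pow_le_pow_left₀ (norm_nonneg y) (by simpa using hR hy) 2
  set ε := (v x₀ - u x₀) / (R ^ 2 + 1)
  have hε : 0 < ε := div_pos (sub_pos.mpr hlt) (by positivity)
  have hεR : ε * R ^ 2 < v x₀ - u x₀ := by
    rw [div_mul_eq_mul_div, div_lt_iff₀ (by positivity)]
    nlinarith
  set w := u - v - ε • fun y : Euc n => ‖y‖ ^ 2
  have hfr : ∀ y ∈ frontier Ω, w x₀ < w y := fun y hy => by
    have := hnorm y (frontier_subset_closure hy)
    have := hnorm x₀ (subset_closure hx₀)
    simp only [w, Pi.sub_apply, Pi.smul_apply, smul_eq_mul]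
    nlinarith [hbdry y hy, sq_nonneg ‖x₀‖]
  have hwc : ContinuousOn w (closure Ω) :=
    (huc.sub hvc).sub (continuous_const.smul (continuous_norm.pow 2)).continuousOn
  obtain ⟨z, hz, hmin⟩ :=
    hΩopen.exists_isLocalMin_of_lt_frontier hΩbdd.isCompact_closure hwc hx₀ hfr
  have hu : ContDiffAt ℝ 2 u z := hu2.contDiffAt (hΩopen.mem_nhds hz)
  have hv : ContDiffAt ℝ 2 v z := hv2.contDiffAt (hΩopen.mem_nhds hz)
  have hv_psd := posSemidef_hessianMatrix hv
    (hvconv.fderiv_fderiv_apply_self_nonneg (hΩopen.mem_nhds hz) hv)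
  exact (hdet z hz).not_gt (hessDet_lt_of_isLocalMin hε hu hv hv_psd hmin)

/-- Comparison principle: let `Ω ⊆ ℝⁿ` (`n ≥ 2`) be a bounded open convex set and let
`u, v ∈ C²(Ω) ∩ C⁰(Ω̄)` be convex.  If `det D²u ≤ det D²v` in `Ω` and `u ≥ v` on `∂Ω`,
then `u ≥ v` in `Ω`. -/
theorem comparison_principle (n : ℕ) (hn : 2 ≤ n)
    (Ω : Set (Euc n)) (hΩopen : IsOpen Ω) (hΩbdd : Bornology.IsBounded Ω)
    (hΩconv : Convex ℝ Ω) (u v : Euc n → ℝ)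
    (hu2 : ContDiffOn ℝ 2 u Ω) (huc : ContinuousOn u (closure Ω)) (huconv : ConvexOn ℝ Ω u)
    (hv2 : ContDiffOn ℝ 2 v Ω) (hvc : ContinuousOn v (closure Ω)) (hvconv : ConvexOn ℝ Ω v)
    (hdet : ∀ x ∈ Ω, hessDet u x ≤ hessDet v x)
    (hbdry : ∀ x ∈ frontier Ω, v x ≤ u x) :
    ∀ x ∈ Ω, v x ≤ u x :=
  comparison_principle_general n hn Ω hΩopen hΩbdd u v hu2 huc hv2 hvc hvconv hdet hbdry
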